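/- In the feedback network with 0/1 upward weights, 0/f downward weights, and threshold τ = rk: if B is presented at all times ≥ t, then for any concept c and any t' ≥ t, rep(c) fires at time t' if and only if c ∈ S(t' − t), where S(s) = supp_{r,f}(B,*,s). -/

import Mathlib

open scoped Classical
noncomputable section

/-- A concept hierarchy: concepts at levels `0..L`, each concept at level `≥ 1`
has exactly `k` children one level below, level-0 concepts have no children,
there are exactly `k` top-level concepts, and every non-top concept has a parent. -/
structure ConceptHierarchy (α : Type) [DecidableEq α] where
  L : ℕ
  k : ℕ
  concepts : Finset α
  level : α → ℕ
  children : α → Finset α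
  level_le : ∀ c ∈ concepts, level c ≤ L
  children_mem : ∀ c ∈ concepts, ∀ c' ∈ children c, c' ∈ concepts
  children_level : ∀ c ∈ concepts, ∀ c' ∈ children c, level c' + 1 = level c
  children_card : ∀ c ∈ concepts, 1 ≤ level c → (children c).card = k
  children_leaf : ∀ c ∈ concepts, level c = 0 → children c = ∅
  top_card : (concepts.filter (fun c => level c = L)).card = k
  has_parent : ∀ c ∈ concepts, level c < L → ∃ c' ∈ concepts, c ∈ children c'

namespace ConceptHierarchy

variable {α : Type} [DecidableEq α]

/-- The parents of a concept. -/
def parents (H : ConceptHierarchy α) (c : α) : Finset α :=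
  H.concepts.filter (fun c' => c ∈ H.children c')

/-- Limited overlap: each concept at level `≥ 1` shares at most `o·k` children
with the union of the other concepts at the same level. -/
def LimitedOverlap (H : ConceptHierarchy α) (o : ℝ) : Prop :=
  ∀ c ∈ H.concepts, 1 ≤ H.level c →
    (((H.children c).filter (fun d => ∃ c' ∈ H.concepts, c' ≠ c ∧
        H.level c' = H.level c ∧ d ∈ H.children c')).card : ℝ) ≤ o * H.k

/-- Tree hierarchy: no overlap among child sets of distinct same-level concepts. -/
def IsTree (H : ConceptHierarchy α) : Prop :=
  ∀ c ∈ H.concepts, ∀ c' ∈ H.concepts, H.level c = H.level c' → c ≠ c' →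
    Disjoint (H.children c) (H.children c')

/-- Descendant relation: reflexive-transitive closure of the children relation. -/
inductive Desc (H : ConceptHierarchy α) : α → α → Prop
  | refl (c : α) : Desc H c c
  | step {c d e : α} : d ∈ H.children c → Desc H d e → Desc H c e

/-- The level-0 descendants of a concept. -/
def leaves (H : ConceptHierarchy α) (c : α) : Finset α :=
  H.concepts.filter (fun d => H.Desc c d ∧ H.level d = 0)

/-- Level-indexed bottom-up support sets: `S(0) = B ∩ C₀`,
`S(ℓ) = {c at level ℓ : |children(c) ∩ S(ℓ-1)| ≥ r·k}`. -/
def suppL (H : ConceptHierarchy α) (r : ℝ) (B : Finset α) : ℕ → Finset α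
  | 0 => B ∩ H.concepts.filter (fun c => H.level c = 0)
  | (ℓ+1) => H.concepts.filter (fun c => H.level c = ℓ + 1 ∧
      r * H.k ≤ ((H.children c ∩ suppL H r B ℓ).card : ℝ))

/-- `supp_r(B) = ⋃_ℓ S(ℓ)`. -/
def supp (H : ConceptHierarchy α) (r : ℝ) (B : Finset α) : Set α :=
  ⋃ ℓ, ↑(H.suppL r B ℓ)

/-- Time-and-level-indexed support sets with feedback strength `f`:
`S(0,t) = B`; `S(ℓ,0) = ∅` for `ℓ ≥ 1`; and
`S(ℓ,t) = S(ℓ,t-1) ∪ {c at level ℓ : |children(c) ∩ S(ℓ-1,t-1)| + f·|parents(c) ∩ S(ℓ+1,t-1)| ≥ r·k}`. -/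
def suppFB (H : ConceptHierarchy α) (r f : ℝ) (B : Finset α) : ℕ → ℕ → Finset α
  | 0, _ => B
  | (_+1), 0 => ∅
  | (ℓ+1), (t+1) => suppFB H r f B (ℓ+1) t ∪
      H.concepts.filter (fun c => H.level c = ℓ + 1 ∧
        r * H.k ≤ ((H.children c ∩ suppFB H r f B ℓ t).card : ℝ) +
          f * ((H.parents c ∩ suppFB H r f B (ℓ+2) t).card : ℝ))
  termination_by ℓ t => t

/-- `supp_{r,f}(B,*,t) = ⋃_ℓ S(ℓ,t)`. -/
def suppFBatTime (H : ConceptHierarchy α) (r f : ℝ) (B : Finset α) (t : ℕ) : Set α :=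
  ⋃ ℓ, ↑(H.suppFB r f B ℓ t)

/-- `supp_{r,f}(B) = ⋃_{ℓ,t} S(ℓ,t)`. -/
def suppFBSet (H : ConceptHierarchy α) (r f : ℝ) (B : Finset α) : Set α :=
  ⋃ t, H.suppFBatTime r f B t

end ConceptHierarchy

/-- Feed-forward 0/1 weights: weight 1 from the rep of a child to the rep of its
parent, weight 0 otherwise. -/
def ffWeight {α ν : Type} [DecidableEq α] (H : ConceptHierarchy α) (rep : α → ν)
    (u v : ν) : ℝ :=
  if ∃ c ∈ H.concepts, ∃ c' ∈ H.children c, u = rep c' ∧ v = rep c then 1 else 0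

/-- Feedback-network weights: weight 1 upward (rep of child to rep of parent),
weight `f` downward (rep of parent to rep of child), 0 otherwise. -/
def fbWeight {α ν : Type} [DecidableEq α] (H : ConceptHierarchy α) (rep : α → ν)
    (f : ℝ) (u v : ν) : ℝ :=
  if ∃ c ∈ H.concepts, ∃ c' ∈ H.children c, u = rep c' ∧ v = rep c then 1
  else if ∃ c ∈ H.concepts, ∃ c' ∈ H.children c, u = rep c ∧ v = rep c' then f
  else 0

/-! Both sides evolve by the same rule. A rep neuron at layer `ℓ + 1` receives input only from
the reps of the children (weight 1) and parents (weight `f`) of its concept, so its potential at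
time `t + s` is `|children(c) ∩ S(ℓ, s)| + f·|parents(c) ∩ S(ℓ + 2, s)|` once the firing pattern at
time `t + s` is known to be `S(s)`; this is exactly the threshold test defining `S(ℓ + 1, s + 1)`.
The cumulative union in the definition of `S` is harmless because, for `f ≥ 0`, the test is
monotone in `s`. Induction on `s` then matches the two. -/

namespace ConceptHierarchy

variable {α : Type} [DecidableEq α] (H : ConceptHierarchy α) {r f : ℝ} {B : Finset α}

@[simp]
theorem mem_parents {c d : α} : d ∈ H.parents c ↔ d ∈ H.concepts ∧ c ∈ H.children d :=
  Finset.mem_filter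

theorem level_add_one_of_mem_parents {c d : α} (hd : d ∈ H.parents c) :
    H.level c + 1 = H.level d :=
  H.children_level d (H.mem_parents.1 hd).1 c (H.mem_parents.1 hd).2

@[simp]
theorem suppFB_zero_left (s : ℕ) : H.suppFB r f B 0 s = B := by
  rw [suppFB]

@[simp]
theorem suppFB_succ_zero (ℓ : ℕ) : H.suppFB r f B (ℓ + 1) 0 = ∅ := by
  rw [suppFB]

theorem suppFB_subset_suppFB_succ (ℓ s : ℕ) :
    H.suppFB r f B ℓ s ⊆ H.suppFB r f B ℓ (s + 1) := by
  cases ℓ with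
  | zero => simp
  | succ ℓ => rw [suppFB.eq_3]; exact Finset.subset_union_left

theorem level_of_mem_suppFB_succ {ℓ s : ℕ} {c : α} (hc : c ∈ H.suppFB r f B (ℓ + 1) s) :
    H.level c = ℓ + 1 := by
  induction s with
  | zero => simp at hc
  | succ s ih =>
    rw [suppFB.eq_3, Finset.mem_union, Finset.mem_filter] at hc
    exact hc.elim ih fun h => h.2.1

theorem mem_suppFB_succ_succ (hf : 0 ≤ f) {ℓ : ℕ} {c : α} (hc : c ∈ H.concepts)
    (hl : H.level c = ℓ + 1) (s : ℕ) :
    c ∈ H.suppFB r f B (ℓ + 1) (s + 1) ↔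
      r * H.k ≤ ((H.children c ∩ H.suppFB r f B ℓ s).card : ℝ) +
        f * ((H.parents c ∩ H.suppFB r f B (ℓ + 2) s).card : ℝ) := by
  induction s with
  | zero => simp [suppFB.eq_3, hc, hl]
  | succ s ih =>
    rw [suppFB.eq_3, Finset.mem_union, Finset.mem_filter, ih]
    simp only [hc, hl, true_and]
    refine or_iff_right_of_imp fun h => h.trans ?_
    gcongr <;> apply suppFB_subset_suppFB_succ

theorem mem_suppFBatTime_iff (hB : ∀ b ∈ B, b ∈ H.concepts ∧ H.level b = 0) (c : α) (s : ℕ) :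
    c ∈ H.suppFBatTime r f B s ↔ c ∈ H.suppFB r f B (H.level c) s := by
  refine ⟨fun h => ?_, fun h => Set.mem_iUnion.2 ⟨_, h⟩⟩
  obtain ⟨ℓ, h⟩ := Set.mem_iUnion.1 h
  rw [Finset.mem_coe] at h
  cases ℓ with
  | zero =>
    rw [suppFB_zero_left] at h
    rwa [(hB c h).2, suppFB_zero_left]
  | succ ℓ => rwa [H.level_of_mem_suppFB_succ h]

theorem filter_eq_inter_suppFB {P : α → Prop} {T : Finset α} {m s : ℕ}
    (hT : ∀ d ∈ T, d ∈ H.concepts ∧ H.level d = m)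
    (hP : ∀ d ∈ H.concepts, P d ↔ d ∈ H.suppFB r f B (H.level d) s) :
    T.filter P = T ∩ H.suppFB r f B m s := by
  rw [← Finset.filter_mem_eq_inter]
  refine Finset.filter_congr fun d hd => ?_
  rw [hP d (hT d hd).1, (hT d hd).2]

end ConceptHierarchy

section Network

variable {α ν : Type} [DecidableEq α] {H : ConceptHierarchy α} {rep : α → ν} {c : α}

theorem disjoint_image_children_parents (hinj : Set.InjOn rep H.concepts)
    (hc : c ∈ H.concepts) :
    Disjoint ((H.children c).image rep) ((H.parents c).image rep) := by
  rw [Finset.disjoint_left]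
  simp only [Finset.mem_image]
  rintro _ ⟨d, hd, rfl⟩ ⟨e, he, hed⟩
  have hcd := H.children_mem c hc d hd
  obtain rfl : e = d := hinj (H.mem_parents.1 he).1 hcd hed
  have := H.children_level c hc e hd
  have := H.level_add_one_of_mem_parents he
  omega

theorem fbWeight_rep_right (hinj : Set.InjOn rep H.concepts) (hc : c ∈ H.concepts)
    (f : ℝ) (v : ν) :
    fbWeight H rep f v (rep c) =
      (if v ∈ (H.children c).image rep then 1 else 0) +
        f * (if v ∈ (H.parents c).image rep then 1 else 0) := by
  have hup : (∃ d ∈ H.concepts, ∃ d' ∈ H.children d, v = rep d' ∧ rep c = rep d) ↔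
      v ∈ (H.children c).image rep := by
    simp only [Finset.mem_image]
    constructor
    · rintro ⟨d, hd, d', hd', rfl, hcd⟩
      obtain rfl := hinj hc hd hcd
      exact ⟨d', hd', rfl⟩
    · rintro ⟨d', hd', rfl⟩
      exact ⟨c, hc, d', hd', rfl, rfl⟩
  have hdown : (∃ d ∈ H.concepts, ∃ d' ∈ H.children d, v = rep d ∧ rep c = rep d') ↔
      v ∈ (H.parents c).image rep := by
    simp only [Finset.mem_image, ConceptHierarchy.mem_parents]
    constructor
    · rintro ⟨d, hd, d', hd', rfl, hcd⟩
      obtain rfl := hinj hc (H.children_mem d hd d' hd') hcd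
      exact ⟨d, ⟨hd, hd'⟩, rfl⟩
    · rintro ⟨d, ⟨hd, hcd⟩, rfl⟩
      exact ⟨d, hd, c, hcd, rfl, rfl⟩
  have hdisj : v ∈ (H.children c).image rep → v ∉ (H.parents c).image rep :=
    fun h => Finset.disjoint_left.1 (disjoint_image_children_parents hinj hc) h
  simp only [fbWeight, hup, hdown]
  split_ifs <;> simp_all

theorem sum_fbWeight_rep_right (hinj : Set.InjOn rep H.concepts) (hc : c ∈ H.concepts)
    (f : ℝ) (F : Finset ν) :
    ∑ v ∈ F, fbWeight H rep f v (rep c) =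
      (((H.children c).filter (rep · ∈ F)).card : ℝ) +
        f * (((H.parents c).filter (rep · ∈ F)).card : ℝ) := by
  have hcard : ∀ T ⊆ H.concepts,
      ((F.filter (· ∈ T.image rep)).card : ℝ) = ((T.filter (rep · ∈ F)).card : ℝ) := by
    intro T hT
    rw [Finset.filter_mem_eq_inter, Finset.inter_comm, ← Finset.filter_mem_eq_inter,
      Finset.filter_image, Finset.card_image_of_injOn (hinj.mono (Finset.coe_subset.2
        ((Finset.filter_subset (rep · ∈ F) T).trans hT)))]
  simp only [fbWeight_rep_right hinj hc, Finset.sum_add_distrib, ← Finset.mul_sum,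
    Finset.sum_boole]
  rw [hcard _ (H.children_mem c hc), hcard _ fun d hd => (H.mem_parents.1 hd).1]

theorem sum_fbWeight_firing [Fintype ν] {layer : ν → ℕ} (hinj : Set.InjOn rep H.concepts)
    (hlayer : ∀ c ∈ H.concepts, layer (rep c) = H.level c) (hc : c ∈ H.concepts)
    (f : ℝ) (P : ν → Prop) :
    ∑ v ∈ Finset.univ.filter
        (fun v => (layer v + 1 = layer (rep c) ∨ layer v = layer (rep c) + 1) ∧ P v),
      fbWeight H rep f v (rep c) =
      (((H.children c).filter (fun d => P (rep d))).card : ℝ) +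
        f * (((H.parents c).filter (fun d => P (rep d))).card : ℝ) := by
  have hadjacent : ∀ T : Finset α, (∀ d ∈ T,
      layer (rep d) + 1 = layer (rep c) ∨ layer (rep d) = layer (rep c) + 1) →
      T.filter (rep · ∈ Finset.univ.filter
        (fun v => (layer v + 1 = layer (rep c) ∨ layer v = layer (rep c) + 1) ∧ P v)) =
      T.filter (fun d => P (rep d)) :=
    fun T hT => Finset.filter_congr fun d hd => by simp [hT d hd]
  rw [sum_fbWeight_rep_right hinj hc, hadjacent _ fun d hd => Or.inl ?_,
    hadjacent _ fun d hd => Or.inr ?_]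
  · have := H.level_add_one_of_mem_parents hd
    rw [hlayer c hc, hlayer d (H.mem_parents.1 hd).1]
    omega
  · have := H.children_level c hc d hd
    rw [hlayer c hc, hlayer d (H.children_mem c hc d hd)]
    omega

end Network

theorem fb_fires_iff_supported_general {α ν : Type} [DecidableEq α] [Fintype ν]
    (H : ConceptHierarchy α) (rep : α → ν) (layer : ν → ℕ)
    (hrep_inj : ∀ c ∈ H.concepts, ∀ c' ∈ H.concepts, rep c = rep c' → c = c')
    (hrep_layer : ∀ c ∈ H.concepts, layer (rep c) = H.level c)
    (r f : ℝ) (hf : 0 ≤ f)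
    (firing : ν → ℕ → Prop) (B : Finset α)
    (hB : ∀ b ∈ B, b ∈ H.concepts ∧ H.level b = 0) (t : ℕ)
    (hpres : ∀ u : ν, layer u = 0 → ∀ s : ℕ, t ≤ s → (firing u s ↔ ∃ b ∈ B, u = rep b))
    (hinit : ∀ u : ν, 1 ≤ layer u → ¬ firing u t)
    (hdyn : ∀ u : ν, 1 ≤ layer u → ∀ s : ℕ, (firing u (s + 1) ↔
        r * H.k ≤ ∑ v ∈ Finset.univ.filter
            (fun v => (layer v + 1 = layer u ∨ layer v = layer u + 1) ∧ firing v s),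
          fbWeight H rep f v u)) :
    ∀ c ∈ H.concepts, ∀ s : ℕ,
      (firing (rep c) (t + s) ↔ c ∈ H.suppFBatTime r f B s) := by
  have hinj : Set.InjOn rep H.concepts := fun c hc c' hc' h => hrep_inj c hc c' hc' h
  have hleaf : ∀ c ∈ H.concepts, H.level c = 0 → ∀ s, (firing (rep c) (t + s) ↔ c ∈ B) := by
    intro c hc hl s
    rw [hpres _ (by rw [hrep_layer c hc, hl]) _ (Nat.le_add_right t s)]
    exact ⟨fun ⟨b, hb, hcb⟩ => hinj hc (hB b hb).1 hcb ▸ hb, fun h => ⟨c, h, rfl⟩⟩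
  suffices key : ∀ s, ∀ c ∈ H.concepts,
      (firing (rep c) (t + s) ↔ c ∈ H.suppFB r f B (H.level c) s) by
    intro c hc s
    rw [H.mem_suppFBatTime_iff hB, key s c hc]
  intro s
  induction s with
  | zero =>
    intro c hc
    rcases hl : H.level c with _ | ℓ
    · rw [H.suppFB_zero_left, hleaf c hc hl]
    · rw [H.suppFB_succ_zero]
      simpa using hinit (rep c) (by rw [hrep_layer c hc, hl]; omega)
  | succ s ih =>
    intro c hc
    rcases hl : H.level c with _ | ℓ
    · rw [H.suppFB_zero_left, hleaf c hc hl]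
    · have hchildren : ∀ d ∈ H.children c, d ∈ H.concepts ∧ H.level d = ℓ := fun d hd =>
        ⟨H.children_mem c hc d hd, by have := H.children_level c hc d hd; omega⟩
      have hparents : ∀ d ∈ H.parents c, d ∈ H.concepts ∧ H.level d = ℓ + 2 := fun d hd =>
        ⟨(H.mem_parents.1 hd).1, by have := H.level_add_one_of_mem_parents hd; omega⟩
      rw [H.mem_suppFB_succ_succ hf hc hl, ← add_assoc,
        hdyn _ (by rw [hrep_layer c hc, hl]; omega), sum_fbWeight_firing hinj hrep_layer hc,
        H.filter_eq_inter_suppFB hchildren ih, H.filter_eq_inter_suppFB hparents ih]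

/-- in the feedback network with threshold `τ = rk`, if `B` is
presented at all times `≥ t`, then `rep(c)` fires at time `t + s` iff
`c ∈ S(s) = supp_{r,f}(B,*,s)`. -/
theorem fb_fires_iff_supported {α ν : Type} [DecidableEq α] [DecidableEq ν] [Fintype ν]
    (H : ConceptHierarchy α) (rep : α → ν) (layer : ν → ℕ)
    (hrep_inj : ∀ c ∈ H.concepts, ∀ c' ∈ H.concepts, rep c = rep c' → c = c')
    (hrep_layer : ∀ c ∈ H.concepts, layer (rep c) = H.level c)
    (r f : ℝ) (hf : 0 ≤ f)
    (firing : ν → ℕ → Prop) (B : Finset α)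
    (hB : ∀ b ∈ B, b ∈ H.concepts ∧ H.level b = 0) (t : ℕ)
    (hpres : ∀ u : ν, layer u = 0 → ∀ s : ℕ, t ≤ s → (firing u s ↔ ∃ b ∈ B, u = rep b))
    (hinit : ∀ u : ν, 1 ≤ layer u → ¬ firing u t)
    (hdyn : ∀ u : ν, 1 ≤ layer u → ∀ s : ℕ, (firing u (s + 1) ↔
        r * H.k ≤ ∑ v ∈ Finset.univ.filter
            (fun v => (layer v + 1 = layer u ∨ layer v = layer u + 1) ∧ firing v s),
          fbWeight H rep f v u)) :
    ∀ c ∈ H.concepts, ∀ s : ℕ,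
      (firing (rep c) (t + s) ↔ c ∈ H.suppFBatTime r f B s) :=
  fb_fires_iff_supported_general H rep layer hrep_inj hrep_layer r f hf firing B hB t hpres hinit
    hdyn
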